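/- Assume that L(λ) exists and is finite for every λ in a nonempty open interval G ⊂ ℝ. Let G₀ be a nonempty open interval and λ₁, λ₂ ∈ G∖{0} with λ₁ < λ < λ₂ for all λ ∈ G₀. Then the family {h_λ : λ ∈ G₀} satisfies the tail condition for (μ_α^{t_α}), i.e. for every ε > 0 there is a real M such that limsup_α (∫_{{x : λx > M}} e^{λx/t_α} μ_α(dx))^{t_α} < ε for all λ ∈ G₀. -/

import Mathlib

open Filter MeasureTheory Topology Set
open scoped ENNReal NNReal

noncomputable section

variable {X : Type*} [TopologicalSpace X] [MeasurableSpace X]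
variable {A : Type*} [Preorder A]

/-- `(∫ e^{h/t_α} dμ_α)^{t_α}` as an extended nonnegative real. -/
noncomputable def expPow (μ : A → Measure X) (t : A → ℝ) (h : X → EReal) (a : A) : ℝ≥0∞ :=
  (∫⁻ x, EReal.exp ((((t a)⁻¹ : ℝ) : EReal) * h x) ∂(μ a)) ^ (t a)

/-- `Λ̄(h) = log limsup_α (∫ e^{h/t_α} dμ_α)^{t_α}`. -/
noncomputable def LambdaBar (μ : A → Measure X) (t : A → ℝ) (h : X → EReal) : EReal :=
  ENNReal.log (Filter.limsup (expPow μ t h) Filter.atTop)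

/-- `Λ̲(h) = log liminf_α (∫ e^{h/t_α} dμ_α)^{t_α}`. -/
noncomputable def LambdaUnder (μ : A → Measure X) (t : A → ℝ) (h : X → EReal) : EReal :=
  ENNReal.log (Filter.liminf (expPow μ t h) Filter.atTop)

/-- `Λ(h)` exists when `Λ̲(h) = Λ̄(h)`. -/
def LambdaExists (μ : A → Measure X) (t : A → ℝ) (h : X → EReal) : Prop :=
  LambdaUnder μ t h = LambdaBar μ t h

/-- `l₁(x) = −log inf { liminf_α μ_α(G)^{t_α} : G open, x ∈ G }`. -/
noncomputable def lOne (μ : A → Measure X) (t : A → ℝ) (x : X) : EReal :=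
  - ENNReal.log (⨅ (G : Set X) (_ : IsOpen G) (_ : x ∈ G),
      Filter.liminf (fun a => μ a G ^ (t a)) Filter.atTop)

/-- `l₀(x) = −log inf { limsup_α μ_α(G)^{t_α} : G open, x ∈ G }`. -/
noncomputable def lZero (μ : A → Measure X) (t : A → ℝ) (x : X) : EReal :=
  - ENNReal.log (⨅ (G : Set X) (_ : IsOpen G) (_ : x ∈ G),
      Filter.limsup (fun a => μ a G ^ (t a)) Filter.atTop)

/-- The uniform tail condition for a family `T`. -/
def TailCondition (μ : A → Measure X) (t : A → ℝ) (T : Set (X → EReal)) : Prop :=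
  ∀ ε : ℝ, 0 < ε → ∃ M : ℝ, ∀ h ∈ T,
    Filter.limsup (fun a =>
        (∫⁻ x in {x | (M : EReal) < h x}, EReal.exp ((((t a)⁻¹ : ℝ) : EReal) * h x) ∂(μ a))
          ^ (t a)) Filter.atTop
      < ENNReal.ofReal ε

/-- Vague large deviation principle with powers `t` and rate function `J`. -/
def VagueLDP (μ : A → Measure X) (t : A → ℝ) (J : X → ℝ≥0∞) : Prop :=
  LowerSemicontinuous J ∧
  (∀ K : Set X, IsCompact K →
      Filter.limsup (fun a => μ a K ^ (t a)) Filter.atTop ≤ ⨆ x ∈ K, EReal.exp (-(J x : EReal))) ∧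
  (∀ G : Set X, IsOpen G →
      (⨆ x ∈ G, EReal.exp (-(J x : EReal))) ≤ Filter.liminf (fun a => μ a G ^ (t a)) Filter.atTop)

/-- Narrow large deviation principle with powers `t` and rate function `J`. -/
def NarrowLDP (μ : A → Measure X) (t : A → ℝ) (J : X → ℝ≥0∞) : Prop :=
  LowerSemicontinuous J ∧
  (∀ F : Set X, IsClosed F →
      Filter.limsup (fun a => μ a F ^ (t a)) Filter.atTop ≤ ⨆ x ∈ F, EReal.exp (-(J x : EReal))) ∧
  (∀ G : Set X, IsOpen G →
      (⨆ x ∈ G, EReal.exp (-(J x : EReal))) ≤ Filter.liminf (fun a => μ a G ^ (t a)) Filter.atTop)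

/-- Exponential tightness of `(μ_α)` with respect to `(t_α)`. -/
def ExpTight (μ : A → Measure X) (t : A → ℝ) : Prop :=
  ∀ ε : ℝ, 0 < ε → ∃ K : Set X, IsCompact K ∧
    Filter.limsup (fun a => μ a Kᶜ ^ (t a)) Filter.atTop < ENNReal.ofReal ε

/-- The linear function `h_λ(x) = λ x`, as an `EReal`-valued function on `ℝ`. -/
noncomputable def hlin (l : ℝ) : ℝ → EReal := fun x => ((l * x : ℝ) : EReal)

/-- Legendre-Fenchel transform of `L` restricted to `G` (extended by `+∞` off `G`):
`L|_G^*(x) = sup_{λ ∈ G} (λ x − L λ)`. -/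
noncomputable def LegG (L : ℝ → ℝ) (G : Set ℝ) (x : ℝ) : EReal :=
  ⨆ l ∈ G, ((l * x - L l : ℝ) : EReal)

/-- Abstract Legendre-Fenchel transform `Λ|_S^*(x) = sup_{h ∈ S} (h(x) − Λ(h))`. -/
noncomputable def LamStar (μ : A → Measure X) (t : A → ℝ) (S : Set (X → EReal)) (x : X) : EReal :=
  ⨆ h ∈ S, (h x - LambdaBar μ t h)

/-- The union of the ranges of the left and right derivatives of `L` restricted to `G`. -/
def ranLR (L : ℝ → ℝ) (G : Set ℝ) : Set ℝ :=
  {d : ℝ | ∃ l ∈ G, HasDerivWithinAt L d (Set.Iio l) l ∨ HasDerivWithinAt L d (Set.Ioi l) l}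

/-
On `{λx > M}` one has `e^{λx/t} ≤ e^{-ηM/t} e^{(1+η)λx/t}`, and since `λ ↦ λx` is linear,
`e^{(1+η)λx/t} ≤ e^{p₁x/t} + e^{p₂x/t}` for `λ ∈ [λ₁, λ₂]` and `pᵢ = (1+η)λᵢ`. Choosing `η > 0`
so small that `p₁, p₂ ∈ G`, integrating and taking `t`-th powers (`(a+b)^t ≤ a^t + b^t` for
`t ≤ 1`) bounds the `limsup` of the tail integral uniformly in `λ` by
`e^{-ηM} (e^{L p₁} + e^{L p₂})`, which is small for large `M`.
-/

lemma exists_pos_one_add_mul_mem {G : Set ℝ} (hG : IsOpen G) {l₁ l₂ : ℝ} (h₁ : l₁ ∈ G)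
    (h₂ : l₂ ∈ G) : ∃ η > 0, (1 + η) * l₁ ∈ G ∧ (1 + η) * l₂ ∈ G := by
  have hnhds : ∀ l ∈ G, ∀ᶠ η in 𝓝 (0 : ℝ), (1 + η) * l ∈ G := fun l hl =>
    (by fun_prop : Continuous fun η : ℝ => (1 + η) * l).continuousAt.preimage_mem_nhds
      (by simpa using hG.mem_nhds hl)
  exact ((((hnhds l₁ h₁).and (hnhds l₂ h₂)).filter_mono nhdsWithin_le_nhds).and
    (self_mem_nhdsWithin (s := Ioi 0))).exists.imp fun η hη => ⟨hη.2, hη.1⟩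

lemma limsup_add_le_add_limsup {ι : Type*} {f : Filter ι} (u v : ι → ℝ≥0∞) :
    limsup (u + v) f ≤ limsup u f + limsup v f := by
  refine le_of_forall_gt_imp_ge_of_dense fun c hc => ?_
  obtain ⟨a, ha, b, hb, hab⟩ := ENNReal.exists_add_lt_of_add_lt hc
  refine (limsup_le_of_le (by isBoundedDefault) ?_).trans hab.le
  filter_upwards [eventually_lt_of_limsup_lt ha, eventually_lt_of_limsup_lt hb] with x hu hv
  exact add_le_add hu.le hv.le

lemma limsup_expPow_of_LambdaBar_eq {Ω ι : Type*} [MeasurableSpace Ω] [Preorder ι]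
    {μ : ι → Measure Ω} {t : ι → ℝ} {h : Ω → EReal} {r : ℝ} (hr : LambdaBar μ t h = r) :
    limsup (expPow μ t h) atTop = ENNReal.ofReal (Real.exp r) := by
  simpa only [LambdaBar, ENNReal.exp_log, EReal.exp_coe] using congrArg EReal.exp hr

lemma EReal.exp_coe_mul_hlin (s l x : ℝ) :
    EReal.exp ((s : EReal) * hlin l x) = ENNReal.ofReal (Real.exp (s * (l * x))) := by
  rw [hlin, ← EReal.coe_mul, EReal.exp_coe]

lemma Real.exp_mul_le_exp_mul_add_exp_mul {a b c : ℝ} (hc : c ∈ Icc a b) (y : ℝ) :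
    Real.exp (c * y) ≤ Real.exp (a * y) + Real.exp (b * y) := by
  rcases le_total 0 y with hy | hy
  · exact (Real.exp_le_exp.2 (mul_le_mul_of_nonneg_right hc.2 hy)).trans
      (le_add_of_nonneg_left (Real.exp_pos _).le)
  · exact (Real.exp_le_exp.2 (mul_le_mul_of_nonpos_right hc.1 hy)).trans
      (le_add_of_nonneg_right (Real.exp_pos _).le)

lemma Real.exp_inv_mul_le_of_lt_mul {τ η l l₁ l₂ M x : ℝ} (hτ : 0 < τ) (hη : 0 ≤ η)
    (hl : l ∈ Icc l₁ l₂) (hx : M < l * x) :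
    Real.exp (τ⁻¹ * (l * x)) ≤ Real.exp (-(η * M) * τ⁻¹) *
      (Real.exp (τ⁻¹ * ((1 + η) * l₁ * x)) + Real.exp (τ⁻¹ * ((1 + η) * l₂ * x))) := by
  have htilt : 0 ≤ η * τ⁻¹ * (l * x - M) :=
    mul_nonneg (mul_nonneg hη (inv_pos.2 hτ).le) (sub_nonneg.2 hx.le)
  have hscaled : (1 + η) * l ∈ Icc ((1 + η) * l₁) ((1 + η) * l₂) :=
    ⟨by gcongr; exact hl.1, by gcongr; exact hl.2⟩
  calc Real.exp (τ⁻¹ * (l * x))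
      ≤ Real.exp (-(η * M) * τ⁻¹ + (1 + η) * l * (τ⁻¹ * x)) := Real.exp_le_exp.2 (by linarith)
    _ = Real.exp (-(η * M) * τ⁻¹) * Real.exp ((1 + η) * l * (τ⁻¹ * x)) := Real.exp_add _ _
    _ ≤ Real.exp (-(η * M) * τ⁻¹) *
          (Real.exp ((1 + η) * l₁ * (τ⁻¹ * x)) + Real.exp ((1 + η) * l₂ * (τ⁻¹ * x))) := by
      gcongr; exact Real.exp_mul_le_exp_mul_add_exp_mul hscaled _
    _ = _ := by simp only [mul_left_comm _ τ⁻¹]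

lemma rpow_setLIntegral_exp_hlin_le (ν : Measure ℝ) {τ η l l₁ l₂ : ℝ} (hτ : 0 < τ) (hτ1 : τ ≤ 1)
    (hη : 0 ≤ η) (hl : l ∈ Icc l₁ l₂) (M : ℝ) :
    (∫⁻ x in {x | (M : EReal) < hlin l x}, EReal.exp (((τ⁻¹ : ℝ) : EReal) * hlin l x) ∂ν) ^ τ ≤
      ENNReal.ofReal (Real.exp (-(η * M))) *
        ((∫⁻ x, EReal.exp (((τ⁻¹ : ℝ) : EReal) * hlin ((1 + η) * l₁) x) ∂ν) ^ τ +
          (∫⁻ x, EReal.exp (((τ⁻¹ : ℝ) : EReal) * hlin ((1 + η) * l₂) x) ∂ν) ^ τ) := by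
  simp only [EReal.exp_coe_mul_hlin]
  set c := ENNReal.ofReal (Real.exp (-(η * M) * τ⁻¹))
  set J : ℝ → ℝ≥0∞ := fun p => ∫⁻ x, ENNReal.ofReal (Real.exp (τ⁻¹ * (p * x))) ∂ν
  have hc : c ^ τ = ENNReal.ofReal (Real.exp (-(η * M))) := by
    rw [ENNReal.ofReal_rpow_of_nonneg (Real.exp_pos _).le hτ.le, ← Real.exp_mul,
      inv_mul_cancel_right₀ hτ.ne']
  have hint : ∫⁻ x in {x | (M : EReal) < hlin l x},
      ENNReal.ofReal (Real.exp (τ⁻¹ * (l * x))) ∂ν ≤ c * (J ((1 + η) * l₁) + J ((1 + η) * l₂)) :=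
    calc _ ≤ ∫⁻ x in {x | (M : EReal) < hlin l x}, c *
            (ENNReal.ofReal (Real.exp (τ⁻¹ * ((1 + η) * l₁ * x))) +
              ENNReal.ofReal (Real.exp (τ⁻¹ * ((1 + η) * l₂ * x)))) ∂ν := by
          refine setLIntegral_mono (by fun_prop) fun x hx => ?_
          rw [← ENNReal.ofReal_add (Real.exp_pos _).le (Real.exp_pos _).le,
            ← ENNReal.ofReal_mul (Real.exp_pos _).le]
          exact ENNReal.ofReal_le_ofReal <| Real.exp_inv_mul_le_of_lt_mul hτ hη hl <| by
            simpa only [hlin, mem_ofPred_eq, EReal.coe_lt_coe_iff] using hx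
      _ ≤ _ := setLIntegral_le_lintegral _ _
      _ = _ := by
        rw [lintegral_const_mul' _ _ ENNReal.ofReal_ne_top, lintegral_add_left (by fun_prop)]
  calc _ ≤ (c * (J ((1 + η) * l₁) + J ((1 + η) * l₂))) ^ τ := ENNReal.rpow_le_rpow hint hτ.le
    _ = c ^ τ * (J ((1 + η) * l₁) + J ((1 + η) * l₂)) ^ τ := ENNReal.mul_rpow_of_nonneg _ _ hτ.le
    _ ≤ _ := by rw [hc]; gcongr; exact ENNReal.rpow_add_le_add_rpow _ _ hτ.le hτ1

theorem statement19_general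
    {A : Type*} [Preorder A]
    (μ : A → Measure ℝ) (t : A → ℝ)
    (hpos : ∀ a, 0 < t a) (hto0 : Tendsto t atTop (𝓝 (0 : ℝ)))
    (G : Set ℝ) (hGopen : IsOpen G)
    (L : ℝ → ℝ)
    (hL : ∀ l ∈ G, LambdaExists μ t (hlin l) ∧ LambdaBar μ t (hlin l) = ((L l : ℝ) : EReal))
    (G₀ : Set ℝ)
    (l₁ l₂ : ℝ) (hl₁G : l₁ ∈ G) (hl₂G : l₂ ∈ G)
    (hbetween : ∀ l ∈ G₀, l₁ < l ∧ l < l₂) :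
    TailCondition μ t {h : ℝ → EReal | ∃ l ∈ G₀, h = hlin l} := by
  intro ε hε
  obtain ⟨η, hη, hp₁, hp₂⟩ := exists_pos_one_add_mul_mem hGopen hl₁G hl₂G
  set C := Real.exp (L ((1 + η) * l₁)) + Real.exp (L ((1 + η) * l₂))
  obtain ⟨M, hM⟩ : ∃ M : ℝ, Real.exp (-(η * M)) * C < ε :=
    ((by simpa using (Real.tendsto_exp_neg_atTop_nhds_zero.comp
      (tendsto_id.const_mul_atTop hη)).mul_const C :
        Tendsto (fun M : ℝ => Real.exp (-(η * M)) * C) atTop (𝓝 0)).eventually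
      (gt_mem_nhds hε)).exists
  refine ⟨M, ?_⟩
  rintro _ ⟨l, hl, rfl⟩
  have hlI : l ∈ Icc l₁ l₂ := ⟨(hbetween l hl).1.le, (hbetween l hl).2.le⟩
  have htail : ∀ᶠ a in atTop,
      (∫⁻ x in {x | (M : EReal) < hlin l x},
          EReal.exp ((((t a)⁻¹ : ℝ) : EReal) * hlin l x) ∂(μ a)) ^ (t a) ≤
        ENNReal.ofReal (Real.exp (-(η * M))) *
          (expPow μ t (hlin ((1 + η) * l₁)) + expPow μ t (hlin ((1 + η) * l₂))) a := by
    filter_upwards [hto0.eventually (eventually_le_nhds one_pos)] with a ha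
    exact rpow_setLIntegral_exp_hlin_le (μ a) (hpos a) ha hη.le hlI M
  calc _ ≤ limsup (fun a => ENNReal.ofReal (Real.exp (-(η * M))) *
          (expPow μ t (hlin ((1 + η) * l₁)) + expPow μ t (hlin ((1 + η) * l₂))) a) atTop :=
        limsup_le_limsup htail
    _ ≤ ENNReal.ofReal (Real.exp (-(η * M))) * (ENNReal.ofReal (Real.exp (L ((1 + η) * l₁))) +
          ENNReal.ofReal (Real.exp (L ((1 + η) * l₂)))) := by
        rw [ENNReal.limsup_const_mul_of_ne_top ENNReal.ofReal_ne_top,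
          ← limsup_expPow_of_LambdaBar_eq (hL _ hp₁).2,
          ← limsup_expPow_of_LambdaBar_eq (hL _ hp₂).2]
        gcongr
        exact limsup_add_le_add_limsup _ _
    _ < ENNReal.ofReal ε := by
        rw [← ENNReal.ofReal_add (Real.exp_pos _).le (Real.exp_pos _).le,
          ← ENNReal.ofReal_mul (Real.exp_pos _).le]
        exact (ENNReal.ofReal_lt_ofReal_iff hε).2 hM

/-- The family `{h_λ : λ ∈ G₀}` satisfies the (uniform) tail condition. -/
theorem statement19
    {A : Type*} [Preorder A] [IsDirected A (· ≤ ·)] [Nonempty A]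
    (μ : A → Measure ℝ) (t : A → ℝ)
    (hRadon : ∀ a, (μ a).InnerRegular) (hSub : ∀ a, μ a Set.univ ≤ 1)
    (hpos : ∀ a, 0 < t a) (hto0 : Tendsto t atTop (𝓝 (0 : ℝ)))
    (G : Set ℝ) (hGopen : IsOpen G) (hGint : G.OrdConnected) (hGne : G.Nonempty)
    (L : ℝ → ℝ)
    (hL : ∀ l ∈ G, LambdaExists μ t (hlin l) ∧ LambdaBar μ t (hlin l) = ((L l : ℝ) : EReal))
    (G₀ : Set ℝ) (hG₀open : IsOpen G₀) (hG₀int : G₀.OrdConnected) (hG₀ne : G₀.Nonempty)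
    (l₁ l₂ : ℝ) (hl₁G : l₁ ∈ G) (hl₁0 : l₁ ≠ 0) (hl₂G : l₂ ∈ G) (hl₂0 : l₂ ≠ 0)
    (hbetween : ∀ l ∈ G₀, l₁ < l ∧ l < l₂) :
    TailCondition μ t {h : ℝ → EReal | ∃ l ∈ G₀, h = hlin l} :=
  statement19_general μ t hpos hto0 G hGopen L hL G₀ l₁ l₂ hl₁G hl₂G hbetween

end
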